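/- Let n be an odd positive integer, let d be a positive integer with gcd(d, n) = 1, and let q = 2^n. Let ∘ denote the symplectic Knuth presemifield multiplication on F_q. Then: (i) for every m ∈ F_q with m ∉ {0,1}, the set {y ∈ F_q : (y^{2^d} + y) ∘ m + y = 0} has exactly 2 elements; (ii) the set {y ∈ F_q : (y^{2^d} + y) ∘ 1 + y = 0} equals {0}. (These facts express that O_d := {(y^{2^d}+y, y) : y ∈ F_q} ∪ {(0),(1)} is a translation hyperoval in the symplectic presemifield plane Π(K_n^{td}).) -/

import Mathlib

/-!
Write `u(y) = y^{2^d} + y`. Since `Tr (u(y)) = 0`, the equation `u(y) ∘ m + y = 0` is equivalent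
to `h(y) = m u(y)`, where `h(y) = y + Tr(u(y) y)`. Because `Tr` takes values in `𝔽₂` and
`u(y + 1) = u(y)`, the map `h` is an involution of `F ∖ {0, 1}` preserving `u`. Because
`gcd(d, n) = 1`, the fixed points of `y ↦ y^{2^d}` are only `0` and `1`, which makes
`y ↦ y / u(y)` a permutation of `F ∖ {0, 1}`. Hence besides `y = 0` the equation has exactly one
solution when `m ∉ {0, 1}`, namely the preimage of `m` under `y ↦ h(y) / u(h(y))`, and none when
`m = 1`.
-/

open Finset Set

theorem eq_zero_or_one_of_pow_two_pow_eq_self {K : Type*} [Field K] {d n : ℕ} (hdn : d.Coprime n)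
    {x : K} (hd : x ^ 2 ^ d = x) (hn : x ^ 2 ^ n = x) : x = 0 ∨ x = 1 := by
  have periodic {k : ℕ} (hk : x ^ 2 ^ k = x) : Function.IsPeriodicPt (· ^ 2) k x := by
    simpa [Function.IsPeriodicPt, Function.IsFixedPt, pow_iterate] using hk
  have h := (periodic hd).gcd (periodic hn)
  rw [hdn.gcd_eq_one, Function.IsPeriodicPt, Function.IsFixedPt, Function.iterate_one] at h
  rw [← IsIdempotentElem.iff_eq_zero_or_one, IsIdempotentElem, ← sq, h]

namespace SymplecticKnuth

variable {F : Type*} [Field F] {n d : ℕ}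

def absTrace (n : ℕ) (x : F) : F := ∑ i ∈ range n, x ^ 2 ^ i

def knuthMul (n : ℕ) (x y : F) : F :=
  x * y + absTrace n x * y ^ 2 ^ (n - 1) + absTrace n (x ^ 2 * y)

def artinSchreier (d : ℕ) (y : F) : F := y ^ 2 ^ d + y

def artinSchreierSlope (d : ℕ) (y : F) : F := y / artinSchreier d y

def traceShift (n d : ℕ) (y : F) : F := y + absTrace n (artinSchreier d y * y)

@[simp]
theorem absTrace_zero : absTrace n (0 : F) = 0 :=
  sum_eq_zero fun _ _ ↦ zero_pow (by positivity)

variable [CharP F 2]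

theorem absTrace_add (x y : F) : absTrace n (x + y) = absTrace n x + absTrace n y := by
  simp only [absTrace, add_pow_char_pow, sum_add_distrib]

theorem absTrace_pow_two_pow (x : F) (k : ℕ) : absTrace n (x ^ 2 ^ k) = absTrace n x ^ 2 ^ k := by
  simp only [absTrace, sum_pow_char_pow, ← pow_mul, mul_comm]

theorem isIdempotentElem_absTrace (hq : ∀ x : F, x ^ 2 ^ n = x) (x : F) :
    IsIdempotentElem (absTrace n x) := by
  have shift := sum_range_succ' (fun i ↦ x ^ 2 ^ i) n
  rw [sum_range_succ, hq, pow_zero, pow_one, add_left_inj] at shift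
  rw [IsIdempotentElem, ← sq, absTrace, sum_pow_char, shift]
  simp only [← pow_mul, ← pow_succ]

theorem absTrace_eq_zero_or_one (hq : ∀ x : F, x ^ 2 ^ n = x) (x : F) :
    absTrace n x = 0 ∨ absTrace n x = 1 :=
  IsIdempotentElem.iff_eq_zero_or_one.mp (isIdempotentElem_absTrace hq x)

theorem absTrace_artinSchreier (hq : ∀ x : F, x ^ 2 ^ n = x) (y : F) :
    absTrace n (artinSchreier d y) = 0 := by
  rw [artinSchreier, absTrace_add, absTrace_pow_two_pow,
    (isIdempotentElem_absTrace hq y).pow_eq (by positivity), CharTwo.add_self_eq_zero]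

theorem absTrace_add_artinSchreier_mul (hq : ∀ x : F, x ^ 2 ^ n = x) (x y : F) {t : F}
    (ht : t = 0 ∨ t = 1) : absTrace n (x + artinSchreier d y * t) = absTrace n x := by
  rcases ht with rfl | rfl <;> simp [absTrace_add, absTrace_artinSchreier hq]

theorem artinSchreier_add_one (y : F) : artinSchreier d (y + 1) = artinSchreier d y := by
  rw [artinSchreier, artinSchreier, add_pow_char_pow, one_pow, add_add_add_comm,
    CharTwo.add_self_eq_zero, add_zero]

theorem artinSchreier_eq_zero_iff (hq : ∀ x : F, x ^ 2 ^ n = x) (hdn : d.Coprime n) {y : F} :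
    artinSchreier d y = 0 ↔ y = 0 ∨ y = 1 := by
  rw [artinSchreier, CharTwo.add_eq_zero]
  refine ⟨fun h ↦ eq_zero_or_one_of_pow_two_pow_eq_self hdn h (hq y), ?_⟩
  rintro (rfl | rfl) <;> simp

theorem artinSchreier_ne_zero (hq : ∀ x : F, x ^ 2 ^ n = x) (hdn : d.Coprime n) {y : F}
    (hy : y ∈ ({0, 1} : Set F)ᶜ) : artinSchreier d y ≠ 0 :=
  fun h ↦ hy ((artinSchreier_eq_zero_iff hq hdn).mp h)

theorem artinSchreierSlope_injOn (hq : ∀ x : F, x ^ 2 ^ n = x) (hdn : d.Coprime n) :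
    InjOn (artinSchreierSlope d) ({0, 1} : Set F)ᶜ := by
  intro a ha b hb hab
  have ha0 : a ≠ 0 := fun h ↦ ha (Or.inl h)
  have hb0 : b ≠ 0 := fun h ↦ hb (Or.inl h)
  have cross : b ^ 2 ^ d * a = b * a ^ 2 ^ d := by
    rw [artinSchreierSlope, artinSchreierSlope, div_eq_div_iff (artinSchreier_ne_zero hq hdn ha)
      (artinSchreier_ne_zero hq hdn hb), artinSchreier, artinSchreier] at hab
    linear_combination hab
  have hfix : (b / a) ^ 2 ^ d = b / a := by
    rw [div_pow, div_eq_div_iff (pow_ne_zero _ ha0) ha0, cross]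
  rcases eq_zero_or_one_of_pow_two_pow_eq_self hdn hfix (hq _) with h | h
  · exact absurd h (div_ne_zero hb0 ha0)
  · exact ((div_eq_one_iff_eq ha0).mp h).symm

theorem artinSchreierSlope_mapsTo (hq : ∀ x : F, x ^ 2 ^ n = x) (hdn : d.Coprime n) :
    MapsTo (artinSchreierSlope d) ({0, 1} : Set F)ᶜ ({0, 1} : Set F)ᶜ := by
  intro y hy
  have hu := artinSchreier_ne_zero hq hdn hy
  have hy0 : y ≠ 0 := fun h ↦ hy (Or.inl h)
  rintro (h | h)
  · exact div_ne_zero hy0 hu h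
  · rw [mem_singleton_iff, artinSchreierSlope, div_eq_one_iff_eq hu, artinSchreier,
      right_eq_add] at h
    exact hy0 (pow_eq_zero_iff (pow_ne_zero d two_ne_zero) |>.mp h)

theorem artinSchreierSlope_bijOn [Finite F] (hq : ∀ x : F, x ^ 2 ^ n = x) (hdn : d.Coprime n) :
    BijOn (artinSchreierSlope d) ({0, 1} : Set F)ᶜ ({0, 1} : Set F)ᶜ :=
  (toFinite _).injOn_iff_bijOn_of_mapsTo (artinSchreierSlope_mapsTo hq hdn) |>.mp
    (artinSchreierSlope_injOn hq hdn)

theorem artinSchreier_traceShift (hq : ∀ x : F, x ^ 2 ^ n = x) (y : F) :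
    artinSchreier d (traceShift n d y) = artinSchreier d y := by
  rcases absTrace_eq_zero_or_one hq (artinSchreier d y * y) with h | h <;>
    rw [traceShift, h] <;> simp [artinSchreier_add_one]

theorem traceShift_involutive (hq : ∀ x : F, x ^ 2 ^ n = x) :
    Function.Involutive (traceShift n d : F → F) := by
  intro y
  have hinv : absTrace n (artinSchreier d (traceShift n d y) * traceShift n d y) =
      absTrace n (artinSchreier d y * y) := by
    rw [artinSchreier_traceShift hq, traceShift, mul_add,
      absTrace_add_artinSchreier_mul hq _ _ (absTrace_eq_zero_or_one hq _)]
  rw [traceShift, hinv, traceShift, CharTwo.add_cancel_right]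

theorem traceShift_bijOn (hq : ∀ x : F, x ^ 2 ^ n = x) (hdn : d.Coprime n) :
    BijOn (traceShift n d) ({0, 1} : Set F)ᶜ ({0, 1} : Set F)ᶜ := by
  have hmaps : MapsTo (traceShift n d) ({0, 1} : Set F)ᶜ ({0, 1} : Set F)ᶜ := fun y hy h ↦
    artinSchreier_ne_zero hq hdn hy <| by
      rw [← artinSchreier_traceShift hq, (artinSchreier_eq_zero_iff hq hdn).mpr h]
  exact InvOn.bijOn ⟨fun y _ ↦ traceShift_involutive hq y, fun y _ ↦ traceShift_involutive hq y⟩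
    hmaps hmaps

theorem knuthMul_artinSchreier_add_eq_zero_iff (hq : ∀ x : F, x ^ 2 ^ n = x) (y m : F) :
    knuthMul n (artinSchreier d y) m + y = 0 ↔ traceShift n d y = m * artinSchreier d y := by
  set u := artinSchreier d y
  have key {t : F} (ht : t = 0 ∨ t = 1) (h : u * m = y + t) :
      absTrace n (u ^ 2 * m) = absTrace n (u * y) := by
    rw [sq, mul_assoc, h, mul_add, absTrace_add_artinSchreier_mul hq _ _ ht]
  rw [knuthMul, absTrace_artinSchreier hq, zero_mul, add_zero, traceShift]
  constructor
  · intro h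
    have hT := key (absTrace_eq_zero_or_one hq _)
      (by linear_combination h - (y + absTrace n (u ^ 2 * m)) * CharTwo.two_eq_zero (R := F))
    linear_combination -h + hT + (y + absTrace n (u * y)) * CharTwo.two_eq_zero (R := F)
  · intro h
    have hT := key (absTrace_eq_zero_or_one hq _) (by linear_combination -h)
    linear_combination hT - h + (y + absTrace n (u * y)) * CharTwo.two_eq_zero (R := F)

theorem setOf_knuthMul_eq (hq : ∀ x : F, x ^ 2 ^ n = x) (hdn : d.Coprime n) (m : F) :
    {y : F | knuthMul n (artinSchreier d y) m + y = 0} =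
      insert 0 {y ∈ ({0, 1} : Set F)ᶜ | (artinSchreierSlope d ∘ traceShift n d) y = m} := by
  ext y
  rw [mem_ofPred_eq, knuthMul_artinSchreier_add_eq_zero_iff hq, mem_insert_iff, mem_sep_iff]
  by_cases hy : y ∈ ({0, 1} : Set F)ᶜ
  · have hu := artinSchreier_ne_zero hq hdn hy
    have hy0 : y ≠ 0 := fun h ↦ hy (Or.inl h)
    rw [Function.comp_apply, artinSchreierSlope, artinSchreier_traceShift hq, div_eq_iff hu]
    simp [hy, hy0]
  · obtain rfl | rfl : y = 0 ∨ y = 1 := not_not.mp hy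
    · simp [traceShift, artinSchreier]
    · simp [traceShift, artinSchreier, CharTwo.add_self_eq_zero]

end SymplecticKnuth

open SymplecticKnuth in
theorem symplectic_hyperoval_Od_general
    (n : ℕ)
    (d : ℕ) (hdn : Nat.gcd d n = 1)
    {F : Type*} [Field F] [Fintype F] (hF : Fintype.card F = 2 ^ n)
    (Tr : F → F) (hTr : ∀ x : F, Tr x = ∑ i ∈ Finset.range n, x ^ 2 ^ i)
    (smul : F → F → F)
    (hsmul : ∀ x y : F, smul x y = x * y + Tr x * y ^ 2 ^ (n - 1) + Tr (x ^ 2 * y)) :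
    (∀ m : F, m ≠ 0 → m ≠ 1 →
      ({y : F | smul (y ^ 2 ^ d + y) m + y = 0}).ncard = 2) ∧
    {y : F | smul (y ^ 2 ^ d + y) 1 + y = 0} = {0} := by
  have : CharP F 2 := charP_of_card_eq_prime_pow hF
  have hq (x : F) : x ^ 2 ^ n = x := hF ▸ FiniteField.pow_card x
  obtain rfl : Tr = absTrace n := funext hTr
  obtain rfl : smul = knuthMul n := funext₂ hsmul
  have hsol (m : F) : {y : F | knuthMul n (y ^ 2 ^ d + y) m + y = 0} =
      insert 0 {y ∈ ({0, 1} : Set F)ᶜ | (artinSchreierSlope d ∘ traceShift n d) y = m} :=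
    setOf_knuthMul_eq hq hdn m
  have hbij := (artinSchreierSlope_bijOn hq hdn).comp (traceShift_bijOn hq hdn)
  refine ⟨fun m hm0 hm1 ↦ ?_, ?_⟩
  · obtain ⟨y, hy, rfl⟩ := hbij.surjOn (show m ∈ ({0, 1} : Set F)ᶜ by simp [hm0, hm1])
    have hfiber : {z ∈ ({0, 1} : Set F)ᶜ | (artinSchreierSlope d ∘ traceShift n d) z =
        (artinSchreierSlope d ∘ traceShift n d) y} = {y} :=
      Set.ext fun z ↦ ⟨fun ⟨hz, h⟩ ↦ hbij.injOn hz hy h, by rintro rfl; exact ⟨hy, rfl⟩⟩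
    rw [hsol, hfiber, ncard_pair (fun h ↦ hy (Or.inl h.symm))]
  · have hfiber : {z ∈ ({0, 1} : Set F)ᶜ | (artinSchreierSlope d ∘ traceShift n d) z = 1} = ∅ :=
      eq_empty_of_forall_notMem fun z ⟨hz, h⟩ ↦ hbij.mapsTo hz (Or.inr h)
    rw [hsol, hfiber, insert_empty_eq]

/-- Theorem 4.1: for `gcd(d,n) = 1`, the set
`O_d = {(y^{2^d}+y, y) : y ∈ F_q} ∪ {(0),(1)}` is a translation hyperoval in the
symplectic Knuth presemifield plane `Π(K_n^{td})`.  Analytically: (i) for every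
`m ∉ {0,1}` the equation `(y^{2^d}+y) ∘ m + y = 0` has exactly `2` solutions, and
(ii) `(y^{2^d}+y) ∘ 1 + y = 0` only for `y = 0`. -/
theorem symplectic_hyperoval_Od
    (n : ℕ) (hn : Odd n) (hn0 : 0 < n)
    (d : ℕ) (hd : 0 < d) (hdn : Nat.gcd d n = 1)
    {F : Type*} [Field F] [Fintype F] (hF : Fintype.card F = 2 ^ n)
    (Tr : F → F) (hTr : ∀ x : F, Tr x = ∑ i ∈ Finset.range n, x ^ 2 ^ i)
    (smul : F → F → F)
    (hsmul : ∀ x y : F, smul x y = x * y + Tr x * y ^ 2 ^ (n - 1) + Tr (x ^ 2 * y)) :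
    (∀ m : F, m ≠ 0 → m ≠ 1 →
      ({y : F | smul (y ^ 2 ^ d + y) m + y = 0}).ncard = 2) ∧
    {y : F | smul (y ^ 2 ^ d + y) 1 + y = 0} = {0} :=
  symplectic_hyperoval_Od_general n d hdn hF Tr hTr smul hsmul
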